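/- Let G be a graph, S ⊆ V(G), and T₁,…,T_k a twin partition of V(G). Two vertices u, v ∉ S lie in the same component of G − S if and only if u ∈ T_i, v ∈ T_{i'} where T_i and T_{i'} are reachable in V(G) \ S (with the roles of S and its complement interchanged in the definition of reachability). -/

import Mathlib

/-! A single edge between two twin sets forces all edges between them, so a walk in `G - S`
projects onto a sequence of consecutively adjacent twin sets meeting `V \ S` (a twin set may
repeat, being then a clique), and conversely such a sequence lifts to a walk through
representatives outside `S`. -/

variable {V : Type*}

/-- Two vertex sets are adjacent if some edge joins them. -/
def SetsAdj (G : SimpleGraph V) (A B : Set V) : Prop :=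
  ∃ a ∈ A, ∃ b ∈ B, G.Adj a b

/-- `u` and `v` are connected inside the induced subgraph `G[S]`. -/
def ReachIn (G : SimpleGraph V) (S : Set V) (u v : V) : Prop :=
  ∃ (hu : u ∈ S) (hv : v ∈ S), (G.induce S).Reachable ⟨u, hu⟩ ⟨v, hv⟩

/-- `C` is (the vertex set of) a connected component of the induced subgraph `G[S]`. -/
def IsCompOf (G : SimpleGraph V) (S C : Set V) : Prop :=
  ∃ v ∈ S, C = {u | ReachIn G S u v}

/-- A safe set: nonempty, and no component of `G[S]` is adjacent to a larger
component of `G - S`. -/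
def IsSafeSet (G : SimpleGraph V) (S : Set V) : Prop :=
  S.Nonempty ∧ ∀ C D : Set V, IsCompOf G S C → IsCompOf G Sᶜ D →
    SetsAdj G C D → D.ncard ≤ C.ncard

/-- A connected safe set. -/
def IsConnSafeSet (G : SimpleGraph V) (S : Set V) : Prop :=
  IsSafeSet G S ∧ (G.induce S).Connected

/-- The safe number: minimum size of a safe set. -/
noncomputable def sNum (G : SimpleGraph V) : ℕ :=
  sInf {n | ∃ S : Set V, IsSafeSet G S ∧ S.ncard = n}

/-- The connected safe number: minimum size of a connected safe set. -/
noncomputable def csNum (G : SimpleGraph V) : ℕ :=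
  sInf {n | ∃ S : Set V, IsConnSafeSet G S ∧ S.ncard = n}

/-- Two vertices are twins if they have the same neighbors, apart from each other. -/
def AreTwins (G : SimpleGraph V) (u v : V) : Prop :=
  G.neighborSet u \ {v} = G.neighborSet v \ {u}

/-- Two twin sets are adjacent: every vertex of one is adjacent to every
(distinct) vertex of the other. -/
def TwinSetsAdj (G : SimpleGraph V) (A B : Set V) : Prop :=
  ∀ a ∈ A, ∀ b ∈ B, a ≠ b → G.Adj a b

/-- Twin sets `T i` and `T i'` are reachable in `S`: either they are equal and form
a clique, or there is a sequence of twin sets, each meeting `S`, starting at `T i`,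
ending at `T i'`, with consecutive sets adjacent. -/
def ReachableTwinSets {k : ℕ} (G : SimpleGraph V) (T : Fin k → Set V) (S : Set V)
    (i i' : Fin k) : Prop :=
  (i = i' ∧ G.IsClique (T i)) ∨
  ∃ ℓ : ℕ, 1 ≤ ℓ ∧ ∃ f : Fin (ℓ + 1) → Fin k, f 0 = i ∧ f (Fin.last ℓ) = i' ∧
    (∀ j, (T (f j) ∩ S).Nonempty) ∧
    ∀ j : Fin ℓ, TwinSetsAdj G (T (f j.castSucc)) (T (f j.succ))

namespace AreTwins

variable {G : SimpleGraph V} {x y a : V}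

theorem adj_of_adj (h : AreTwins G x a) (hxy : G.Adj x y) (hay : a ≠ y) : G.Adj a y := by
  have hy : y ∈ G.neighborSet x \ {a} := ⟨hxy, fun h => hay (Set.eq_of_mem_singleton h).symm⟩
  rw [h] at hy
  exact hy.1

end AreTwins

section TwinSets

variable {G : SimpleGraph V} {A B W : Set V}

/-- With `A = B`: a twin set spanning an edge is a clique. -/
theorem twinSetsAdj_of_adj (hA : ∀ a ∈ A, ∀ a' ∈ A, AreTwins G a a')
    (hB : ∀ b ∈ B, ∀ b' ∈ B, AreTwins G b b') {x y : V} (hx : x ∈ A) (hy : y ∈ B)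
    (hxy : G.Adj x y) : TwinSetsAdj G A B := by
  intro a ha b hb hab
  by_cases hay : a = y
  · subst hay
    by_cases hbx : b = x
    · exact hbx ▸ hxy.symm
    · have hbx' : G.Adj b x := (hB a hy b hb).adj_of_adj hxy.symm hbx
      exact (hA x hx a ha).adj_of_adj hbx'.symm hab
  · have hay' : G.Adj a y := (hA x hx a ha).adj_of_adj hxy hay
    exact ((hB y hy b hb).adj_of_adj hay'.symm (Ne.symm hab)).symm

theorem ReachIn.trans {x y z : V} (hxy : ReachIn G W x y) (hyz : ReachIn G W y z) :
    ReachIn G W x z :=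
  let ⟨hx, _, rxy⟩ := hxy
  let ⟨_, hz, ryz⟩ := hyz
  ⟨hx, hz, rxy.trans ryz⟩

theorem TwinSetsAdj.reachIn (h : TwinSetsAdj G A B) {x y : V} (hx : x ∈ A ∩ W)
    (hy : y ∈ B ∩ W) : ReachIn G W x y := by
  by_cases hxy : x = y
  · subst hxy
    exact ⟨hx.2, hx.2, .refl _⟩
  · exact ⟨hx.2, hy.2, SimpleGraph.Adj.reachable (G := G.induce W) (h x hx.1 y hy.1 hxy)⟩

theorem reachIn_of_twinSetsAdj_chain {m : ℕ} {A : Fin (m + 2) → Set V}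
    (hmeet : ∀ j, (A j ∩ W).Nonempty)
    (hadj : ∀ j : Fin (m + 1), TwinSetsAdj G (A j.castSucc) (A j.succ))
    {x : V} (hx : x ∈ A 0 ∩ W) (j : Fin (m + 1)) :
    ∀ y ∈ A j.succ ∩ W, ReachIn G W x y := by
  induction j using Fin.induction with
  | zero => exact fun y hy => (hadj 0).reachIn hx hy
  | succ j ih =>
    intro y hy
    obtain ⟨z, hz⟩ := hmeet j.castSucc.succ
    exact (ih z hz).trans ((hadj j.succ).reachIn (Fin.succ_castSucc j ▸ hz) hy)

end TwinSets

section Partition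

variable {G : SimpleGraph V} {W : Set V} {k : ℕ} {T : Fin k → Set V} {i i' : Fin k} {u v : V}

theorem reachIn_of_reachableTwinSets (h : ReachableTwinSets G T W i i') (hu : u ∈ T i)
    (hv : v ∈ T i') (huW : u ∈ W) (hvW : v ∈ W) (huv : u ≠ v) : ReachIn G W u v := by
  rcases h with ⟨rfl, hclique⟩ | ⟨ℓ, hℓ, f, rfl, rfl, hmeet, hadj⟩
  · exact ⟨huW, hvW, SimpleGraph.Adj.reachable (G := G.induce W) (hclique hu hv huv)⟩
  · obtain ⟨m, rfl⟩ : ∃ m, ℓ = m + 1 := ⟨ℓ - 1, by omega⟩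
    exact reachIn_of_twinSetsAdj_chain hmeet hadj ⟨hu, huW⟩ (Fin.last m) v
      ⟨by rwa [Fin.succ_last], hvW⟩

theorem reachableTwinSets_of_reachIn (hcover : ∀ v : V, ∃! i, v ∈ T i)
    (htwin : ∀ i, ∀ u ∈ T i, ∀ v ∈ T i, AreTwins G u v) (h : ReachIn G W u v)
    (hu : u ∈ T i) (hv : v ∈ T i') (huv : u ≠ v) : ReachableTwinSets G T W i i' := by
  obtain ⟨huW, hvW, ⟨p⟩⟩ := h
  choose idx hidx using fun x => (hcover x).exists
  have hlen : 1 ≤ p.length := Nat.one_le_iff_ne_zero.mpr fun h0 =>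
    huv (congrArg Subtype.val (p.eq_of_length_eq_zero h0))
  refine .inr ⟨p.length, hlen, fun j => idx (p.getVert j), ?_, ?_, ?_, ?_⟩
  · simpa using (hcover u).unique (hidx u) hu
  · simpa using (hcover v).unique (hidx v) hv
  · exact fun j => ⟨_, hidx _, (p.getVert j).2⟩
  · intro j
    have hstep : G.Adj (p.getVert j) (p.getVert (j + 1)) := p.adj_getVert_succ j.isLt
    exact twinSetsAdj_of_adj (htwin _) (htwin _) (hidx _) (hidx _) hstep

end Partition

theorem stmt18 (G : SimpleGraph V) (S : Set V) {k : ℕ} (T : Fin k → Set V)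
    (hcover : ∀ v : V, ∃! i, v ∈ T i)
    (htwin : ∀ i, ∀ u ∈ T i, ∀ v ∈ T i, AreTwins G u v)
    (i i' : Fin k) (u v : V)
    (hu : u ∈ T i) (hv : v ∈ T i') (hus : u ∉ S) (hvs : v ∉ S) (huv : u ≠ v) :
    ReachIn G Sᶜ u v ↔ ReachableTwinSets G T Sᶜ i i' :=
  ⟨fun h => reachableTwinSets_of_reachIn hcover htwin h hu hv huv,
    fun h => reachIn_of_reachableTwinSets h hu hv hus hvs huv⟩
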